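/- arXiv:2202.07960 — 2 statements merged into one kernel-verified Lean document; each statement's English description precedes it below -/
import Mathlib

section
/- Let μ > 0, M ≥ 0 and c₀ ≥ 0. Let f : ℝ^d → ℝ be differentiable and μ-strongly convex, i.e. f(y) ≥ f(x) + ∇f(x)·(y − x) + (μ/2)·‖y − x‖² for all x, y ∈ ℝ^d, with a minimizer θ* satisfying ‖θ*‖ ≤ M. On a probability space, let (F_k)_{k≥0} be a filtration, (α_k)_{k≥0} positive reals, (ε_k)_{k≥0} nonnegative reals, and let (θ_k)_{k≥0} and (g_k)_{k≥0} be sequences of square-integrable ℝ^d-valued random vectors such that: θ_k is F_k-measurable; ‖θ₀‖ ≤ M almost surely; θ_{k+1} = Π_M(θ_k − α_k·g_k) almost surely; and almost surely for every k, ‖E[g_k | F_k] − ∇f(θ_k)‖ ≤ (1 + ‖θ_k‖)·ε_k and E[‖g_k‖² | F_k] ≤ c₀·(1 + ‖θ_k‖²). Then for every k ≥ 0: E[‖θ_k − θ*‖²] ≤ 4M²·exp(−(μ/2)·Σ_{i=0}^{k−1} α_i) + (1 + M²)·Σ_{i=0}^{k−1} α_i·(c₀·α_i + 4·μ⁻¹·ε_i²)·exp(−(μ/2)·Σ_{j=i+1}^{k−1}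 α_j). -/
/-!
Since `θ*` lies in the ball, the projection is non-expansive towards it, so
`‖θₖ₊₁ - θ*‖² ≤ ‖θₖ - θ*‖² - 2αₖ⟪θₖ - θ*, gₖ⟫ + αₖ²‖gₖ‖²`. In expectation the cross term only
sees `E[gₖ | Fₖ]`, because `θₖ` is `Fₖ`-measurable; strong convexity at the minimizer and Young's
inequality bound it below by `μ/4 · E‖θₖ - θ*‖²` minus a bias term `2μ⁻¹εₖ²(1 + M²)`, and the
second moment of `gₖ` is at most `c₀(1 + M²)` because all iterates stay in the ball. With
`1 - μαₖ/2 ≤ exp(-μαₖ/2)` this is a one-step contraction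
`Dₖ₊₁ ≤ exp(-μαₖ/2) Dₖ + (1 + M²)αₖ(c₀αₖ + 4μ⁻¹εₖ²)` for `Dₖ = E‖θₖ - θ*‖²`, which unrolls to
the bound since `D₀ ≤ 4M²`.
-/

open MeasureTheory ProbabilityTheory
open scoped RealInnerProductSpace

noncomputable section

/-- Metric projection onto the closed Euclidean ball of radius `M` centered at `0`. -/
def projBall {d : ℕ} (M : ℝ) (x : EuclideanSpace ℝ (Fin d)) : EuclideanSpace ℝ (Fin d) :=
  if ‖x‖ ≤ M then x else (M / ‖x‖) • x

section ProjBall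

variable {d : ℕ} {M : ℝ}

lemma norm_projBall_le (hM : 0 ≤ M) (x : EuclideanSpace ℝ (Fin d)) : ‖projBall M x‖ ≤ M := by
  unfold projBall
  split_ifs with hx
  · exact hx
  · have hx₀ : 0 < ‖x‖ := hM.trans_lt (not_le.mp hx)
    rw [norm_smul, Real.norm_of_nonneg (div_nonneg hM hx₀.le), div_mul_cancel₀ _ hx₀.ne']

lemma norm_projBall_sub_le {y : EuclideanSpace ℝ (Fin d)} (hy : ‖y‖ ≤ M)
    (x : EuclideanSpace ℝ (Fin d)) : ‖projBall M x - y‖ ≤ ‖x - y‖ := by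
  unfold projBall
  split_ifs with hx
  · exact le_rfl
  have hxM : M < ‖x‖ := not_le.mp hx
  have hx₀ : 0 < ‖x‖ := (norm_nonneg y).trans hy |>.trans_lt hxM
  set t := M / ‖x‖
  have ht₀ : 0 ≤ t := div_nonneg ((norm_nonneg y).trans hy) hx₀.le
  have ht₁ : t ≤ 1 := (div_le_one hx₀).mpr hxM.le
  have htx : t * ‖x‖ = M := div_mul_cancel₀ _ hx₀.ne'
  refine pow_le_pow_iff_left₀ (norm_nonneg _) (norm_nonneg _) two_ne_zero |>.mp ?_
  rw [norm_sub_sq_real, norm_sub_sq_real, real_inner_smul_left, norm_smul,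
    Real.norm_of_nonneg ht₀]
  -- `‖t x - y‖² - ‖x - y‖² = (1 - t) (2 ⟪x, y⟫ - (1 + t) ‖x‖²)` and `⟪x, y⟫ ≤ ‖x‖ M`
  nlinarith [real_inner_le_norm x y, mul_le_mul_of_nonneg_left hy hx₀.le]

lemma norm_projBall_sub_sq_le {y : EuclideanSpace ℝ (Fin d)} (hy : ‖y‖ ≤ M)
    (x g : EuclideanSpace ℝ (Fin d)) (a : ℝ) :
    ‖projBall M (x - a • g) - y‖ ^ 2 ≤ ‖x - y‖ ^ 2 - 2 * a * ⟪x - y, g⟫ + a ^ 2 * ‖g‖ ^ 2 := by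
  calc ‖projBall M (x - a • g) - y‖ ^ 2 ≤ ‖x - y - a • g‖ ^ 2 := by
        rw [sub_right_comm]
        gcongr
        exact norm_projBall_sub_le hy _
    _ = ‖x - y‖ ^ 2 - 2 * a * ⟪x - y, g⟫ + a ^ 2 * ‖g‖ ^ 2 := by
        rw [norm_sub_sq_real, real_inner_smul_right, norm_smul, Real.norm_eq_abs, mul_pow, sq_abs]
        ring

end ProjBall

section StrongConvexity

variable {E : Type*} [NormedAddCommGroup E] [InnerProductSpace ℝ E]

lemma inner_gradient_sub_minimizer_ge [CompleteSpace E] {f : E → ℝ} {μ : ℝ}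
    (hconv : ∀ x y : E, f x + ⟪gradient f x, y - x⟫ + μ / 2 * ‖y - x‖ ^ 2 ≤ f y)
    {xstar : E} (hmin : ∀ y, f xstar ≤ f y) (x : E) :
    μ / 2 * ‖x - xstar‖ ^ 2 ≤ ⟪gradient f x, x - xstar⟫ := by
  have h := hconv x xstar
  rw [← neg_sub x xstar, inner_neg_right, norm_neg] at h
  linarith [hmin x]

lemma inner_ge_of_norm_sub_le {μ r : ℝ} (hμ : 0 < μ) {u v w : E}
    (hv : μ / 2 * ‖u‖ ^ 2 ≤ ⟪v, u⟫) (hw : ‖w - v‖ ≤ r) :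
    μ / 4 * ‖u‖ ^ 2 - μ⁻¹ * r ^ 2 ≤ ⟪u, w⟫ := by
  have hsplit : ⟪u, w⟫ = ⟪v, u⟫ + ⟪u, w - v⟫ := by
    rw [inner_sub_right, real_inner_comm v u]; ring
  have hcs : -(‖u‖ * r) ≤ ⟪u, w - v⟫ := by
    have := mul_le_mul_of_nonneg_left hw (norm_nonneg u)
    linarith [neg_abs_le ⟪u, w - v⟫, abs_real_inner_le_norm u (w - v)]
  have hyoung : ‖u‖ * r ≤ μ / 4 * ‖u‖ ^ 2 + μ⁻¹ * r ^ 2 := by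
    have h := sq_nonneg (μ / 2 * ‖u‖ - r)
    have : μ * (μ / 4 * ‖u‖ ^ 2 + μ⁻¹ * r ^ 2 - ‖u‖ * r) = (μ / 2 * ‖u‖ - r) ^ 2 := by
      field_simp; ring
    nlinarith
  linarith

end StrongConvexity

section ConditionalExpectation

variable {Ω E : Type*} {m m0 : MeasurableSpace Ω} {P : Measure Ω}
  [NormedAddCommGroup E] [InnerProductSpace ℝ E]

lemma MeasureTheory.MemLp.integrable_inner {X Y : Ω → E} (hX : MemLp X 2 P) (hY : MemLp Y 2 P) :
    Integrable (fun ω => ⟪X ω, Y ω⟫) P :=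
  memLp_one_iff_integrable.mp ((innerSL ℝ : E →L[ℝ] E →L[ℝ] ℝ).memLp_of_bilin 1 hX hY)

variable [CompleteSpace E] [IsFiniteMeasure P]

lemma integral_inner_condExp (hm : m ≤ m0) {X Y : Ω → E} (hXm : StronglyMeasurable[m] X)
    (hX : MemLp X 2 P) (hY : MemLp Y 2 P) :
    ∫ ω, ⟪X ω, Y ω⟫ ∂P = ∫ ω, ⟪X ω, (P[Y|m]) ω⟫ ∂P := by
  rw [← integral_condExp hm]
  exact integral_congr_ae (condExp_bilin_of_stronglyMeasurable_left
    (innerSL ℝ : E →L[ℝ] E →L[ℝ] ℝ) hXm (hX.integrable_inner hY) (hY.integrable one_le_two))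

lemma integral_le_of_condExp_le [IsProbabilityMeasure P] (hm : m ≤ m0) {Y : Ω → ℝ} {C : ℝ}
    (hY : ∀ᵐ ω ∂P, (P[Y|m]) ω ≤ C) : ∫ ω, Y ω ∂P ≤ C := by
  rw [← integral_condExp hm]
  exact (integral_mono_ae integrable_condExp (integrable_const C) hY).trans_eq (by simp)

end ConditionalExpectation

section SGDStep

variable {Ω : Type*} {m m0 : MeasurableSpace Ω} {P : Measure Ω} [IsProbabilityMeasure P]

lemma integral_inner_sub_minimizer_ge {E : Type*} [NormedAddCommGroup E] [InnerProductSpace ℝ E]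
    [CompleteSpace E] (hm : m ≤ m0) {μ M e : ℝ} (hμ : 0 < μ) {f : E → ℝ}
    (hconv : ∀ x y : E, f x + ⟪gradient f x, y - x⟫ + μ / 2 * ‖y - x‖ ^ 2 ≤ f y)
    {xstar : E} (hmin : ∀ y, f xstar ≤ f y) {X G : Ω → E} (hXm : StronglyMeasurable[m] X)
    (hX : MemLp X 2 P) (hG : MemLp G 2 P) (hXM : ∀ᵐ ω ∂P, ‖X ω‖ ≤ M)
    (hbias : ∀ᵐ ω ∂P, ‖(P[G|m]) ω - gradient f (X ω)‖ ≤ (1 + ‖X ω‖) * e) :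
    μ / 4 * ∫ ω, ‖X ω - xstar‖ ^ 2 ∂P - 2 * μ⁻¹ * e ^ 2 * (1 + M ^ 2) ≤
      ∫ ω, ⟪X ω - xstar, G ω⟫ ∂P := by
  have hU : MemLp (fun ω => X ω - xstar) 2 P := hX.sub (memLp_const xstar)
  rw [integral_inner_condExp (X := fun ω => X ω - xstar) hm (hXm.sub stronglyMeasurable_const)
    hU hG]
  have hpointwise : ∀ᵐ ω ∂P, μ / 4 * ‖X ω - xstar‖ ^ 2 - 2 * μ⁻¹ * e ^ 2 * (1 + M ^ 2) ≤
      ⟪X ω - xstar, (P[G|m]) ω⟫ := by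
    filter_upwards [hbias, hXM] with ω hbiasω hXω
    have hinner := inner_ge_of_norm_sub_le hμ (inner_gradient_sub_minimizer_ge hconv hmin _) hbiasω
    have hsq : ((1 + ‖X ω‖) * e) ^ 2 ≤ 2 * e ^ 2 * (1 + M ^ 2) := by
      have : (1 + ‖X ω‖) ^ 2 ≤ 2 * (1 + M ^ 2) := by
        nlinarith [sq_nonneg (1 - ‖X ω‖), norm_nonneg (X ω)]
      rw [mul_pow]; linarith [mul_le_mul_of_nonneg_right this (sq_nonneg e)]
    linarith [mul_le_mul_of_nonneg_left hsq (inv_nonneg.mpr hμ.le)]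
  calc μ / 4 * ∫ ω, ‖X ω - xstar‖ ^ 2 ∂P - 2 * μ⁻¹ * e ^ 2 * (1 + M ^ 2)
      = ∫ ω, (μ / 4 * ‖X ω - xstar‖ ^ 2 - 2 * μ⁻¹ * e ^ 2 * (1 + M ^ 2)) ∂P := by
        rw [integral_sub ((hU.norm.integrable_sq).const_mul _) (integrable_const _),
          integral_const_mul, integral_const, probReal_univ, one_smul]
    _ ≤ ∫ ω, ⟪X ω - xstar, (P[G|m]) ω⟫ ∂P :=
        integral_mono_ae (((hU.norm.integrable_sq).const_mul _).sub (integrable_const _))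
          (hU.integrable_inner (hG.condExp one_le_two)) hpointwise

lemma integral_norm_sub_sq_projBall_le {d : ℕ} {M a : ℝ} {xstar : EuclideanSpace ℝ (Fin d)}
    (hxstar : ‖xstar‖ ≤ M) {X G Y : Ω → EuclideanSpace ℝ (Fin d)} (hX : MemLp X 2 P)
    (hG : MemLp G 2 P) (hY : MemLp Y 2 P) (hYX : ∀ᵐ ω ∂P, Y ω = projBall M (X ω - a • G ω)) :
    ∫ ω, ‖Y ω - xstar‖ ^ 2 ∂P ≤ ∫ ω, ‖X ω - xstar‖ ^ 2 ∂P -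
      2 * a * ∫ ω, ⟪X ω - xstar, G ω⟫ ∂P + a ^ 2 * ∫ ω, ‖G ω‖ ^ 2 ∂P := by
  have hU : MemLp (fun ω => X ω - xstar) 2 P := hX.sub (memLp_const xstar)
  have hUsq := hU.norm.integrable_sq
  have hUG : Integrable (fun ω => 2 * a * ⟪X ω - xstar, G ω⟫) P :=
    (hU.integrable_inner hG).const_mul _
  have hGsq : Integrable (fun ω => a ^ 2 * ‖G ω‖ ^ 2) P := hG.norm.integrable_sq.const_mul _
  have hpointwise : ∀ᵐ ω ∂P, ‖Y ω - xstar‖ ^ 2 ≤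
      ‖X ω - xstar‖ ^ 2 - 2 * a * ⟪X ω - xstar, G ω⟫ + a ^ 2 * ‖G ω‖ ^ 2 := by
    filter_upwards [hYX] with ω hω
    rw [hω]
    exact norm_projBall_sub_sq_le hxstar _ _ _
  rw [← integral_const_mul, ← integral_const_mul, ← integral_sub hUsq hUG,
    ← integral_add (f := fun ω => ‖X ω - xstar‖ ^ 2 - 2 * a * ⟪X ω - xstar, G ω⟫)
      (hUsq.sub hUG) hGsq]
  exact integral_mono_ae (hY.sub (memLp_const xstar)).norm.integrable_sq
    ((hUsq.sub hUG).add hGsq) hpointwise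

lemma integral_norm_sub_sq_projBall_step_le {d : ℕ} (hm : m ≤ m0) {μ M c₀ a e : ℝ} (hμ : 0 < μ)
    (hc₀ : 0 ≤ c₀) (ha : 0 ≤ a) {f : EuclideanSpace ℝ (Fin d) → ℝ}
    (hconv : ∀ x y : EuclideanSpace ℝ (Fin d),
      f x + ⟪gradient f x, y - x⟫ + μ / 2 * ‖y - x‖ ^ 2 ≤ f y)
    {xstar : EuclideanSpace ℝ (Fin d)} (hmin : ∀ y, f xstar ≤ f y) (hxstar : ‖xstar‖ ≤ M)
    {X G Y : Ω → EuclideanSpace ℝ (Fin d)} (hXm : StronglyMeasurable[m] X)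
    (hX : MemLp X 2 P) (hG : MemLp G 2 P) (hY : MemLp Y 2 P) (hXM : ∀ᵐ ω ∂P, ‖X ω‖ ≤ M)
    (hYX : ∀ᵐ ω ∂P, Y ω = projBall M (X ω - a • G ω))
    (hbias : ∀ᵐ ω ∂P, ‖(P[G|m]) ω - gradient f (X ω)‖ ≤ (1 + ‖X ω‖) * e)
    (hmom : ∀ᵐ ω ∂P, (P[fun ω' => ‖G ω'‖ ^ 2|m]) ω ≤ c₀ * (1 + ‖X ω‖ ^ 2)) :
    ∫ ω, ‖Y ω - xstar‖ ^ 2 ∂P ≤ Real.exp (-(μ / 2) * a) * ∫ ω, ‖X ω - xstar‖ ^ 2 ∂P +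
      (1 + M ^ 2) * (a * (c₀ * a + 4 * μ⁻¹ * e ^ 2)) := by
  have hexpand := integral_norm_sub_sq_projBall_le hxstar hX hG hY hYX
  have hinner := integral_inner_sub_minimizer_ge hm hμ hconv hmin hXm hX hG hXM hbias
  have hmoment : ∫ ω, ‖G ω‖ ^ 2 ∂P ≤ c₀ * (1 + M ^ 2) := by
    refine integral_le_of_condExp_le hm ?_
    filter_upwards [hmom, hXM] with ω hGω hXω
    have : ‖X ω‖ ^ 2 ≤ M ^ 2 := pow_le_pow_left₀ (norm_nonneg _) hXω 2
    nlinarith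
  have hexp : 1 - μ / 2 * a ≤ Real.exp (-(μ / 2) * a) := by
    linarith [Real.add_one_le_exp (-(μ / 2) * a)]
  have hD : 0 ≤ ∫ ω, ‖X ω - xstar‖ ^ 2 ∂P := integral_nonneg fun ω => sq_nonneg _
  linarith [mul_le_mul_of_nonneg_left hinner (by positivity : (0 : ℝ) ≤ 2 * a),
    mul_le_mul_of_nonneg_left hmoment (sq_nonneg a), mul_le_mul_of_nonneg_right hexp hD]

end SGDStep

lemma le_exp_sum_of_le_exp_mul_add {D a b : ℕ → ℝ} {c : ℝ}
    (hstep : ∀ k, D (k + 1) ≤ Real.exp (-c * a k) * D k + b k) (k : ℕ) :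
    D k ≤ D 0 * Real.exp (-c * ∑ i ∈ Finset.range k, a i) +
      ∑ i ∈ Finset.range k, b i * Real.exp (-c * ∑ j ∈ Finset.Ico (i + 1) k, a j) := by
  induction k with
  | zero => simp
  | succ k ih =>
    have hweight : ∀ i ≤ k, Real.exp (-c * ∑ j ∈ Finset.Ico i (k + 1), a j) =
        Real.exp (-c * ∑ j ∈ Finset.Ico i k, a j) * Real.exp (-c * a k) := fun i hi => by
      rw [Finset.sum_Ico_succ_top hi, mul_add, Real.exp_add]
    have hsum : ∑ i ∈ Finset.range (k + 1),
          b i * Real.exp (-c * ∑ j ∈ Finset.Ico (i + 1) (k + 1), a j) =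
        (∑ i ∈ Finset.range k, b i * Real.exp (-c * ∑ j ∈ Finset.Ico (i + 1) k, a j)) *
          Real.exp (-c * a k) + b k := by
      rw [Finset.sum_range_succ, Finset.Ico_self, Finset.sum_empty, mul_zero, Real.exp_zero,
        mul_one, Finset.sum_mul]
      congr 1
      refine Finset.sum_congr rfl fun i hi => ?_
      rw [hweight _ (Finset.mem_range.mp hi), mul_assoc]
    rw [Finset.sum_range_succ, mul_add, Real.exp_add, hsum]
    calc D (k + 1) ≤ Real.exp (-c * a k) * D k + b k := hstep k
      _ ≤ Real.exp (-c * a k) * (D 0 * Real.exp (-c * ∑ i ∈ Finset.range k, a i) +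
            ∑ i ∈ Finset.range k, b i * Real.exp (-c * ∑ j ∈ Finset.Ico (i + 1) k, a j)) +
            b k := by gcongr
      _ = _ := by ring

theorem projected_sgd_strongly_convex_general
    {Ω : Type*} [m0 : MeasurableSpace Ω] (P : Measure Ω) [IsProbabilityMeasure P]
    (d : ℕ) (μ M c₀ : ℝ) (hμ : 0 < μ) (hc₀ : 0 ≤ c₀)
    (f : EuclideanSpace ℝ (Fin d) → ℝ)
    (hconv : ∀ x y : EuclideanSpace ℝ (Fin d),
      f x + ⟪gradient f x, y - x⟫ + μ / 2 * ‖y - x‖ ^ 2 ≤ f y)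
    (θstar : EuclideanSpace ℝ (Fin d))
    (hmin : ∀ y, f θstar ≤ f y) (hθstarM : ‖θstar‖ ≤ M)
    (F : ℕ → MeasurableSpace Ω) (hF : ∀ k, F k ≤ m0)
    (α : ℕ → ℝ) (hα : ∀ k, 0 < α k)
    (ε : ℕ → ℝ)
    (θ g : ℕ → Ω → EuclideanSpace ℝ (Fin d))
    (hθmeas : ∀ k, StronglyMeasurable[F k] (θ k))
    (hθL2 : ∀ k, MemLp (θ k) 2 P) (hgL2 : ∀ k, MemLp (g k) 2 P)
    (hθ0 : ∀ᵐ ω ∂P, ‖θ 0 ω‖ ≤ M)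
    (hrec : ∀ k, ∀ᵐ ω ∂P, θ (k + 1) ω = projBall M (θ k ω - α k • g k ω))
    (hbias : ∀ k, ∀ᵐ ω ∂P,
      ‖(P[g k | F k]) ω - gradient f (θ k ω)‖ ≤ (1 + ‖θ k ω‖) * ε k)
    (hmom : ∀ k, ∀ᵐ ω ∂P,
      (P[fun ω' => ‖g k ω'‖ ^ 2 | F k]) ω ≤ c₀ * (1 + ‖θ k ω‖ ^ 2)) :
    ∀ k : ℕ,
      (∫ ω, ‖θ k ω - θstar‖ ^ 2 ∂P) ≤
        4 * M ^ 2 * Real.exp (-(μ / 2) * ∑ i ∈ Finset.range k, α i) +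
        (1 + M ^ 2) * ∑ i ∈ Finset.range k,
          α i * (c₀ * α i + 4 * μ⁻¹ * ε i ^ 2) *
            Real.exp (-(μ / 2) * ∑ j ∈ Finset.Ico (i + 1) k, α j) := by
  have hM : 0 ≤ M := (norm_nonneg θstar).trans hθstarM
  have hθM : ∀ k, ∀ᵐ ω ∂P, ‖θ k ω‖ ≤ M := by
    intro k
    induction k with
    | zero => exact hθ0
    | succ k _ =>
      filter_upwards [hrec k] with ω hω
      exact hω ▸ norm_projBall_le hM _
  have hinit : ∫ ω, ‖θ 0 ω - θstar‖ ^ 2 ∂P ≤ 4 * M ^ 2 := by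
    refine (integral_mono_ae (f := fun ω => ‖θ 0 ω - θstar‖ ^ 2)
      ((hθL2 0).sub (memLp_const θstar)).norm.integrable_sq
      (integrable_const (4 * M ^ 2)) ?_).trans_eq (by simp)
    filter_upwards [hθ0] with ω hθ0
    nlinarith [norm_sub_le (θ 0 ω) θstar, norm_nonneg (θ 0 ω - θstar)]
  intro k
  refine (le_exp_sum_of_le_exp_mul_add (D := fun k => ∫ ω, ‖θ k ω - θstar‖ ^ 2 ∂P)
    (c := μ / 2) (fun k => integral_norm_sub_sq_projBall_step_le (hF k)
    hμ hc₀ (hα k).le hconv hmin hθstarM (hθmeas k) (hθL2 k) (hgL2 k) (hθL2 (k + 1)) (hθM k)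
    (hrec k) (hbias k) (hmom k)) k).trans ?_
  rw [Finset.mul_sum _ _ (1 + M ^ 2)]
  gcongr ?_ * _ + ∑ i ∈ _, ?_
  exact (mul_assoc _ _ _).le

/-- Projected stochastic gradient descent with biased gradient estimates of a
`μ`-strongly convex function `f`:
`E[‖θ_k − θ*‖²] ≤ 4M² e^{−(μ/2) Σ_{i<k} α_i}
 + (1+M²) Σ_{i<k} α_i (c₀ α_i + 4 μ⁻¹ ε_i²) e^{−(μ/2) Σ_{i<j<k} α_j}`. -/
theorem projected_sgd_strongly_convex
    {Ω : Type*} [m0 : MeasurableSpace Ω] (P : Measure Ω) [IsProbabilityMeasure P]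
    (d : ℕ) (μ M c₀ : ℝ) (hμ : 0 < μ) (hM : 0 ≤ M) (hc₀ : 0 ≤ c₀)
    (f : EuclideanSpace ℝ (Fin d) → ℝ) (hf : Differentiable ℝ f)
    (hconv : ∀ x y : EuclideanSpace ℝ (Fin d),
      f x + ⟪gradient f x, y - x⟫ + μ / 2 * ‖y - x‖ ^ 2 ≤ f y)
    (θstar : EuclideanSpace ℝ (Fin d))
    (hmin : ∀ y, f θstar ≤ f y) (hθstarM : ‖θstar‖ ≤ M)
    (F : ℕ → MeasurableSpace Ω) (hF : ∀ k, F k ≤ m0) (hFmono : Monotone F)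
    (α : ℕ → ℝ) (hα : ∀ k, 0 < α k)
    (ε : ℕ → ℝ) (hε : ∀ k, 0 ≤ ε k)
    (θ g : ℕ → Ω → EuclideanSpace ℝ (Fin d))
    (hθmeas : ∀ k, StronglyMeasurable[F k] (θ k))
    (hθL2 : ∀ k, MemLp (θ k) 2 P) (hgL2 : ∀ k, MemLp (g k) 2 P)
    (hθ0 : ∀ᵐ ω ∂P, ‖θ 0 ω‖ ≤ M)
    (hrec : ∀ k, ∀ᵐ ω ∂P, θ (k + 1) ω = projBall M (θ k ω - α k • g k ω))
    (hbias : ∀ k, ∀ᵐ ω ∂P,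
      ‖(P[g k | F k]) ω - gradient f (θ k ω)‖ ≤ (1 + ‖θ k ω‖) * ε k)
    (hmom : ∀ k, ∀ᵐ ω ∂P,
      (P[fun ω' => ‖g k ω'‖ ^ 2 | F k]) ω ≤ c₀ * (1 + ‖θ k ω‖ ^ 2)) :
    ∀ k : ℕ,
      (∫ ω, ‖θ k ω - θstar‖ ^ 2 ∂P) ≤
        4 * M ^ 2 * Real.exp (-(μ / 2) * ∑ i ∈ Finset.range k, α i) +
        (1 + M ^ 2) * ∑ i ∈ Finset.range k,
          α i * (c₀ * α i + 4 * μ⁻¹ * ε i ^ 2) *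
            Real.exp (-(μ / 2) * ∑ j ∈ Finset.Ico (i + 1) k, α j) :=
  projected_sgd_strongly_convex_general (m0 := m0) P d μ M c₀ hμ hc₀ f hconv θstar hmin hθstarM F hF
    α hα ε θ g hθmeas hθL2 hgL2 hθ0 hrec hbias hmom
end
end

section
/- For every c ≥ 0 there exists a constant C > 0 such that for every μ > 0 and every integer k ≥ 1, setting α_i = 2/(μ·(i+1)) and Δt_i = (i+1)^{−1/3} for all i: Σ_{i=0}^{k−1} α_i·( (c/Δt_i)·α_i + μ⁻¹·Δt_i² )·exp(−μ·Σ_{j=i+1}^{k−1} α_j) ≤ C/(μ²·k^{2/3}). -/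
/-!
Since `μ α_j = 2 / (j + 1)` and the harmonic sum over `[i + 1, k)` dominates
`log ((k + 1) / (i + 2))`, the exponential factor of the `i`-th summand is at most
`(2 (i + 1) / k) ^ 2`. Its prefactor is exactly `(4c + 2) / (μ² (i + 1)^{5/3})`, so the summand
is at most `(16c + 8) (i + 1)^{1/3} / (μ² k²) ≤ (16c + 8) / (μ² k^{5/3})`, and the `k` summands
add up to `(16c + 8) / (μ² k^{2/3})`.
-/

open Finset Real

theorem log_div_le_sum_Ico_inv {m n : ℕ} (hmn : m ≤ n) :
    log (((n : ℝ) + 1) / ((m : ℝ) + 1)) ≤ ∑ j ∈ Ico m n, 1 / ((j : ℝ) + 1) := by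
  induction n, hmn using Nat.le_induction with
  | base => simp
  | succ n hmn ih =>
    have hstep : log (((n : ℝ) + 1 + 1) / ((n : ℝ) + 1)) ≤ 1 / ((n : ℝ) + 1) := by
      calc _ ≤ ((n : ℝ) + 1 + 1) / ((n : ℝ) + 1) - 1 := log_le_sub_one_of_pos (by positivity)
        _ = _ := by field_simp; ring
    rw [sum_Ico_succ_top hmn, Nat.cast_succ]
    calc log (((n : ℝ) + 1 + 1) / ((m : ℝ) + 1))
        = log (((n : ℝ) + 1) / ((m : ℝ) + 1)) + log (((n : ℝ) + 1 + 1) / ((n : ℝ) + 1)) := by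
          rw [← log_mul (by positivity) (by positivity)]
          congr 1
          field_simp
      _ ≤ _ := add_le_add ih hstep

theorem exp_neg_two_mul_sum_Ico_inv_le {m n : ℕ} (hmn : m ≤ n) :
    exp (-2 * ∑ j ∈ Ico m n, 1 / ((j : ℝ) + 1)) ≤ (((m : ℝ) + 1) / ((n : ℝ) + 1)) ^ 2 := by
  calc exp (-2 * ∑ j ∈ Ico m n, 1 / ((j : ℝ) + 1))
      ≤ exp (2 * log (((m : ℝ) + 1) / ((n : ℝ) + 1))) := by
        rw [exp_le_exp, ← inv_div, log_inv]
        linarith [log_div_le_sum_Ico_inv hmn]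
    _ = (((m : ℝ) + 1) / ((n : ℝ) + 1)) ^ 2 := by
        rw [← Nat.cast_ofNat, ← log_pow, exp_log (by positivity)]

theorem td_prefactor_eq (c : ℝ) {μ x : ℝ} (hμ : μ ≠ 0) (hx : 0 < x) :
    2 / (μ * x) * (c / x ^ (-(1 / 3 : ℝ)) * (2 / (μ * x)) + μ⁻¹ * (x ^ (-(1 / 3 : ℝ))) ^ 2) =
      (4 * c + 2) / (μ ^ 2 * x ^ (5 / 3 : ℝ)) := by
  set t := x ^ (1 / 3 : ℝ) with ht
  have hneg : x ^ (-(1 / 3 : ℝ)) = t⁻¹ := rpow_neg hx.le _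
  have h5 : x ^ (5 / 3 : ℝ) = t ^ 5 := by
    rw [ht, ← rpow_natCast, ← rpow_mul hx.le]; norm_num
  have h3 : t ^ 3 = x := by
    rw [ht, ← rpow_natCast, ← rpow_mul hx.le]; norm_num
  rw [hneg, h5, ← h3]
  field_simp
  ring

theorem exp_neg_mul_sum_Ico_two_div_le {μ : ℝ} (hμ : 0 < μ) {i k : ℕ} (hik : i < k) :
    exp (-μ * ∑ j ∈ Ico (i + 1) k, 2 / (μ * ((j : ℝ) + 1))) ≤ (2 * ((i : ℝ) + 1) / k) ^ 2 := by
  have hk0 : (0 : ℝ) < k := by exact_mod_cast (Nat.zero_le i).trans_lt hik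
  have hμsum : -μ * ∑ j ∈ Ico (i + 1) k, 2 / (μ * ((j : ℝ) + 1))
      = -2 * ∑ j ∈ Ico (i + 1) k, 1 / ((j : ℝ) + 1) := by
    rw [mul_sum, mul_sum]
    exact sum_congr rfl fun j _ => by field_simp
  rw [hμsum]
  refine (exp_neg_two_mul_sum_Ico_inv_le hik).trans ?_
  gcongr
  · push_cast
    linarith
  · linarith

theorem td_summand_le {c μ : ℝ} (hc : 0 ≤ c) (hμ : 0 < μ) {i k : ℕ} (hik : i < k) :
    (2 / (μ * ((i : ℝ) + 1))) *
        ((c / (((i : ℝ) + 1) ^ (-(1 / 3 : ℝ)))) * (2 / (μ * ((i : ℝ) + 1))) +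
          μ⁻¹ * (((i : ℝ) + 1) ^ (-(1 / 3 : ℝ))) ^ 2) *
        exp (-μ * ∑ j ∈ Ico (i + 1) k, 2 / (μ * ((j : ℝ) + 1))) ≤
      (16 * c + 8) / (μ ^ 2 * (k : ℝ) ^ (5 / 3 : ℝ)) := by
  have hk0 : (0 : ℝ) < k := by exact_mod_cast (Nat.zero_le i).trans_lt hik
  have hxk : (i : ℝ) + 1 ≤ k := by exact_mod_cast hik
  set x : ℝ := (i : ℝ) + 1
  have hx : 0 < x := by positivity
  rw [td_prefactor_eq c hμ.ne' hx]
  calc (4 * c + 2) / (μ ^ 2 * x ^ (5 / 3 : ℝ)) *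
        exp (-μ * ∑ j ∈ Ico (i + 1) k, 2 / (μ * ((j : ℝ) + 1)))
      ≤ (4 * c + 2) / (μ ^ 2 * x ^ (5 / 3 : ℝ)) * (2 * x / k) ^ 2 := by
        gcongr
        exact exp_neg_mul_sum_Ico_two_div_le hμ hik
    _ = (16 * c + 8) * x ^ (1 / 3 : ℝ) / (μ ^ 2 * k ^ 2) := by
        rw [show (5 / 3 : ℝ) = 2 - 1 / 3 by norm_num, rpow_sub hx, rpow_two]
        field_simp
        ring
    _ ≤ (16 * c + 8) * (k : ℝ) ^ (1 / 3 : ℝ) / (μ ^ 2 * k ^ 2) := by gcongr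
    _ = (16 * c + 8) / (μ ^ 2 * (k : ℝ) ^ (5 / 3 : ℝ)) := by
        rw [show (5 / 3 : ℝ) = 2 - 1 / 3 by norm_num, rpow_sub hk0, rpow_two]
        field_simp

/-- Arithmetic estimate yielding the `O(1/(μ² k^{2/3}))` rate of regularised standard
TD(0): with learning rates `α_i = 2/(μ(i+1))`, time steps `Δt_i = (i+1)^{−1/3}`,
second-moment constants `c/Δt_i` and biases `Δt_i`, the stochastic-approximation error
sum is `≤ C/(μ² k^{2/3})`. -/
theorem rate_standard_td
    (c : ℝ) (hc : 0 ≤ c) :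
    ∃ C > 0, ∀ μ : ℝ, 0 < μ → ∀ k : ℕ, 1 ≤ k →
      ∑ i ∈ Finset.range k,
          (2 / (μ * ((i : ℝ) + 1))) *
            ((c / (((i : ℝ) + 1) ^ (-(1 / 3 : ℝ)))) * (2 / (μ * ((i : ℝ) + 1))) +
              μ⁻¹ * (((i : ℝ) + 1) ^ (-(1 / 3 : ℝ))) ^ 2) *
            Real.exp (-μ * ∑ j ∈ Finset.Ico (i + 1) k, 2 / (μ * ((j : ℝ) + 1))) ≤
        C / (μ ^ 2 * (k : ℝ) ^ ((2 : ℝ) / 3)) := by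
  refine ⟨16 * c + 8, by positivity, fun μ hμ k hk => ?_⟩
  have hk0 : (0 : ℝ) < k := by exact_mod_cast hk
  calc _ ≤ ∑ _i ∈ range k, (16 * c + 8) / (μ ^ 2 * (k : ℝ) ^ (5 / 3 : ℝ)) :=
        sum_le_sum fun i hi => td_summand_le hc hμ (mem_range.1 hi)
    _ = (16 * c + 8) / (μ ^ 2 * (k : ℝ) ^ ((2 : ℝ) / 3)) := by
        rw [sum_const, card_range, nsmul_eq_mul,
          show (5 / 3 : ℝ) = 1 + 2 / 3 by norm_num, rpow_add hk0, rpow_one]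
        field_simp
end
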